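/- For local expert mediators let A_t ⊆ I_t be disjoint sets partitioning I \ I_0 as induced by the optimal joint partition P*, where I_0 is the unique part of P* not contained in any I_t. Then R(P*) ≤ μ(I_0)·v(I_0) + Σ_{j∈Î} s_j + Σ_{t∈M} φ(A_t), where Î = ∪_t I_t, s_j = μ(j) times the second-highest value of item j among bidders, h_j = μ(j) times the highest value, H_i is the set of items for which bidder i has the largest value (ties broken arbitrarily), and φ(S) is the sum of the |B|−1 smallest values among {Σ_{j∈H_i∩S} h_j}_{i∈B}. -/

import Mathlib

open Finset

/-- The second-highest value of `f` over a finite type (0 if fewer than two indices),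
computed as the maximum over pairs of distinct indices of the minimum of the two values. -/
noncomputable def secondMax {B : Type*} [Fintype B] [DecidableEq B] (f : B → ℝ) : ℝ :=
  ((Finset.univ ×ˢ Finset.univ).filter (fun p : B × B => p.1 ≠ p.2)).fold max 0
    (fun p => min (f p.1) (f p.2))

/-- The contribution `μ(S)·v(S)` of a part `S`: the second-highest, over bidders `i`,
of `Σ_{j∈S} μ j · vals i j`. -/
noncomputable def partVal {I B : Type*} [Fintype B] [DecidableEq B]
    (μ : I → ℝ) (vals : B → I → ℝ) (S : Finset I) : ℝ :=
  secondMax (fun i => ∑ j ∈ S, μ j * vals i j)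

/-- The revenue of a collection of parts. -/
noncomputable def revenue {I B : Type*} [Fintype B] [DecidableEq B]
    (μ : I → ℝ) (vals : B → I → ℝ) (P : Finset (Finset I)) : ℝ :=
  ∑ S ∈ P, partVal μ vals S

/-- `P` is a partition of the whole item set. -/
def IsPartition {I : Type*} (P : Finset (Finset I)) : Prop :=
  (∀ j : I, ∃ S ∈ P, j ∈ S) ∧
  (∀ S ∈ P, ∀ T ∈ P, S ≠ T → Disjoint S T) ∧
  (∅ : Finset I) ∉ P

/-- `h_j = μ(j)` times the highest value of item `j` among bidders. -/
noncomputable def hval {I B : Type*} [Fintype B] (μ : I → ℝ) (vals : B → I → ℝ)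
    (j : I) : ℝ :=
  Finset.univ.fold max 0 (fun i : B => μ j * vals i j)

/-- `φ(S)`: with `owner j` the bidder valuing `j` most, the sum of all but the largest
of the per-bidder totals `Σ_{j ∈ H_i ∩ S} h_j`, i.e. the sum of the `|B|-1` smallest. -/
noncomputable def phi {I B : Type*} [Fintype B] [DecidableEq I] [DecidableEq B]
    (μ : I → ℝ) (vals : B → I → ℝ) (owner : I → B) (S : Finset I) : ℝ :=
  (∑ j ∈ S, hval μ vals j) -
    Finset.univ.fold max 0 (fun i : B => ∑ j ∈ S.filter (fun j => owner j = i), hval μ vals j)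

/-!
Remove the part `I0`. On an item it does not own, a bidder's value is at most the second-highest
one, so on a part `S` bidder `i` values `S` at most `Σ_{j∈S} s_j` plus the `h`-mass of the items of
`S` that `i` owns. Distinct bidders own disjoint items, so the smaller of two bidders' masses plus
the largest mass is at most the total `h`-mass of `S`; hence `v(S) ≤ Σ_{j∈S} s_j + φ(S)`. Summing
over the parts, the singleton terms add up to at most `Σ_{j∈Î} s_j`, and `φ` is superadditive on
disjoint sets (the total is additive, the maximum subadditive), so grouping the parts by mediator
bounds their `φ`-terms by `Σ_t φ(A_t)`.
-/

lemma Finset.fold_max_nonneg {α : Type*} (s : Finset α) (f : α → ℝ) : 0 ≤ s.fold max 0 f :=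
  (Finset.le_fold_max _).mpr (Or.inl le_rfl)

lemma Finset.fold_max_sum_le_sum_fold_max {α κ : Type*} (s : Finset α) (Q : Finset κ)
    (g : κ → α → ℝ) :
    s.fold max 0 (fun x => ∑ k ∈ Q, g k x) ≤ ∑ k ∈ Q, s.fold max 0 (g k) :=
  (Finset.fold_max_le _).mpr ⟨Finset.sum_nonneg fun _ _ => Finset.fold_max_nonneg _ _,
    fun x hx => Finset.sum_le_sum fun _ _ => (Finset.le_fold_max _).mpr (Or.inr ⟨x, hx, le_rfl⟩)⟩

lemma min_add_le_of_pairwise_add_le {ι : Type*} {f : ι → ℝ} {T : ℝ}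
    (hf : ∀ a b, a ≠ b → f a + f b ≤ T) {a b : ι} (hab : a ≠ b) (c : ι) :
    min (f a) (f b) + f c ≤ T := by
  by_cases hca : c = a
  · subst hca
    linarith [min_le_right (f c) (f b), hf b c (Ne.symm hab)]
  · linarith [min_le_left (f a) (f b), hf a c (Ne.symm hca)]

lemma Finset.sum_sum_le_sum_of_pairwiseDisjoint {α : Type*} [DecidableEq α] {E : Finset (Finset α)}
    (hE : (E : Set (Finset α)).PairwiseDisjoint id) {U : Finset α} (hU : ∀ S ∈ E, S ⊆ U)
    {f : α → ℝ} (hf : ∀ x, 0 ≤ f x) :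
    ∑ S ∈ E, ∑ x ∈ S, f x ≤ ∑ x ∈ U, f x := by
  calc ∑ S ∈ E, ∑ x ∈ S, f x = ∑ x ∈ E.biUnion id, f x := (Finset.sum_biUnion hE).symm
    _ ≤ ∑ x ∈ U, f x :=
      Finset.sum_le_sum_of_subset_of_nonneg (Finset.biUnion_subset.mpr hU) fun x _ _ => hf x

lemma IsPartition.pairwiseDisjoint {I : Type*} {P : Finset (Finset I)} (hP : IsPartition P) :
    (P : Set (Finset I)).PairwiseDisjoint id :=
  fun S hS T hT hST => hP.2.1 S hS T hT hST

section SecondMax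

variable {B : Type*} [Fintype B] [DecidableEq B] {f : B → ℝ}

lemma secondMax_nonneg (f : B → ℝ) : 0 ≤ secondMax f :=
  Finset.fold_max_nonneg _ _

lemma secondMax_le {c : ℝ} (hc : 0 ≤ c) (h : ∀ a b : B, a ≠ b → min (f a) (f b) ≤ c) :
    secondMax f ≤ c :=
  (Finset.fold_max_le _).mpr ⟨hc, fun p hp => h p.1 p.2 (by simpa using hp)⟩

lemma min_le_secondMax {a b : B} (hab : a ≠ b) : min (f a) (f b) ≤ secondMax f :=
  (Finset.le_fold_max _).mpr (Or.inr ⟨(a, b), by simpa using hab, le_rfl⟩)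

end SecondMax

section LocalExperts

variable {I B : Type*} [Fintype B] [DecidableEq B] (μ : I → ℝ) (vals : B → I → ℝ)

omit [DecidableEq B] in
lemma hval_nonneg (j : I) : 0 ≤ hval μ vals j :=
  Finset.fold_max_nonneg _ _

omit [DecidableEq B] in
lemma mul_vals_le_hval (i : B) (j : I) : μ j * vals i j ≤ hval μ vals j :=
  (Finset.le_fold_max _).mpr (Or.inr ⟨i, Finset.mem_univ i, le_rfl⟩)

lemma partVal_nonneg (S : Finset I) : 0 ≤ partVal μ vals S :=
  secondMax_nonneg _

variable {μ vals} in
lemma mul_vals_le_partVal_singleton {owner : I → B} (hμ : ∀ j, 0 ≤ μ j)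
    (howner : ∀ (i : B) (j : I), vals i j ≤ vals (owner j) j) {i : B} {j : I}
    (hij : i ≠ owner j) : μ j * vals i j ≤ partVal μ vals {j} := by
  refine le_trans ?_ (min_le_secondMax (f := fun i => ∑ k ∈ {j}, μ k * vals i k) hij)
  simpa only [Finset.sum_singleton] using
    le_min le_rfl (mul_le_mul_of_nonneg_left (howner i j) (hμ j))

variable (owner : I → B)

/-- The paper's `Σ_{j ∈ H_i ∩ S} h_j`. -/
noncomputable def ownedMass (S : Finset I) (i : B) : ℝ :=
  ∑ j ∈ S with owner j = i, hval μ vals j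

lemma ownedMass_le_sum_hval (S : Finset I) (i : B) :
    ownedMass μ vals owner S i ≤ ∑ j ∈ S, hval μ vals j :=
  Finset.sum_le_sum_of_subset_of_nonneg (Finset.filter_subset _ _)
    fun j _ _ => hval_nonneg μ vals j

variable {μ vals owner} in
lemma sum_mul_vals_le (hμ : ∀ j, 0 ≤ μ j)
    (howner : ∀ (i : B) (j : I), vals i j ≤ vals (owner j) j) (S : Finset I) (i : B) :
    ∑ j ∈ S, μ j * vals i j ≤
      (∑ j ∈ S, partVal μ vals {j}) + ownedMass μ vals owner S i := by
  rw [ownedMass, Finset.sum_filter, ← Finset.sum_add_distrib]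
  refine Finset.sum_le_sum fun j _ => ?_
  split_ifs with hj
  · linarith [mul_vals_le_hval μ vals i j, partVal_nonneg μ vals {j}]
  · simpa using mul_vals_le_partVal_singleton hμ howner (Ne.symm hj)

variable [DecidableEq I]

lemma phi_eq (S : Finset I) :
    phi μ vals owner S =
      (∑ j ∈ S, hval μ vals j) - Finset.univ.fold max 0 (ownedMass μ vals owner S) :=
  rfl

lemma ownedMass_add_ownedMass_le (S : Finset I) {a b : B} (hab : a ≠ b) :
    ownedMass μ vals owner S a + ownedMass μ vals owner S b ≤ ∑ j ∈ S, hval μ vals j := by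
  have hdisj : Disjoint (S.filter (owner · = a)) (S.filter (owner · = b)) :=
    Finset.disjoint_filter.mpr fun j _ hja hjb => hab (hja.symm.trans hjb)
  rw [ownedMass, ownedMass, ← Finset.sum_union hdisj]
  exact Finset.sum_le_sum_of_subset_of_nonneg
    (Finset.union_subset (Finset.filter_subset _ _) (Finset.filter_subset _ _))
    fun j _ _ => hval_nonneg μ vals j

lemma ownedMass_sup (Q : Finset (Finset I)) (hQ : (Q : Set (Finset I)).PairwiseDisjoint id)
    (i : B) :
    ownedMass μ vals owner (Q.sup id) i = ∑ S ∈ Q, ownedMass μ vals owner S i := by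
  simp only [ownedMass, Finset.sum_filter, Finset.sup_eq_biUnion, Finset.sum_biUnion hQ, id]

lemma phi_nonneg (S : Finset I) : 0 ≤ phi μ vals owner S := by
  rw [phi_eq, sub_nonneg]
  exact (Finset.fold_max_le _).mpr ⟨Finset.sum_nonneg fun j _ => hval_nonneg μ vals j,
    fun i _ => ownedMass_le_sum_hval μ vals owner S i⟩

lemma min_ownedMass_le_phi (S : Finset I) {a b : B} (hab : a ≠ b) :
    min (ownedMass μ vals owner S a) (ownedMass μ vals owner S b) ≤ phi μ vals owner S := by
  rw [phi_eq, le_sub_iff_add_le, add_comm, ← le_sub_iff_add_le]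
  refine (Finset.fold_max_le _).mpr ⟨?_, fun c _ => ?_⟩
  · linarith [min_le_left (ownedMass μ vals owner S a) (ownedMass μ vals owner S b),
      ownedMass_le_sum_hval μ vals owner S a]
  · linarith [min_add_le_of_pairwise_add_le
      (fun a b hab => ownedMass_add_ownedMass_le μ vals owner S hab) hab c]

variable {μ vals owner}

lemma partVal_le_sum_partVal_singleton_add_phi (hμ : ∀ j, 0 ≤ μ j)
    (howner : ∀ (i : B) (j : I), vals i j ≤ vals (owner j) j) (S : Finset I) :
    partVal μ vals S ≤ (∑ j ∈ S, partVal μ vals {j}) + phi μ vals owner S := by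
  refine secondMax_le (add_nonneg (Finset.sum_nonneg fun j _ => partVal_nonneg μ vals {j})
    (phi_nonneg μ vals owner S)) fun a b hab => ?_
  calc min (∑ j ∈ S, μ j * vals a j) (∑ j ∈ S, μ j * vals b j)
      ≤ min ((∑ j ∈ S, partVal μ vals {j}) + ownedMass μ vals owner S a)
          ((∑ j ∈ S, partVal μ vals {j}) + ownedMass μ vals owner S b) :=
        min_le_min (sum_mul_vals_le hμ howner S a) (sum_mul_vals_le hμ howner S b)
    _ = (∑ j ∈ S, partVal μ vals {j}) +
          min (ownedMass μ vals owner S a) (ownedMass μ vals owner S b) :=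
        min_add_add_left _ _ _
    _ ≤ _ := add_le_add le_rfl (min_ownedMass_le_phi μ vals owner S hab)

lemma sum_phi_le_phi_sup (Q : Finset (Finset I))
    (hQ : (Q : Set (Finset I)).PairwiseDisjoint id) :
    ∑ S ∈ Q, phi μ vals owner S ≤ phi μ vals owner (Q.sup id) := by
  have htotal : ∑ j ∈ Q.sup id, hval μ vals j = ∑ S ∈ Q, ∑ j ∈ S, hval μ vals j := by
    rw [Finset.sup_eq_biUnion, Finset.sum_biUnion hQ]
    rfl
  have hmax : Finset.univ.fold max 0 (ownedMass μ vals owner (Q.sup id)) ≤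
      ∑ S ∈ Q, Finset.univ.fold max 0 (ownedMass μ vals owner S) := by
    rw [show ownedMass μ vals owner (Q.sup id) = fun i => ∑ S ∈ Q, ownedMass μ vals owner S i
      from funext (ownedMass_sup μ vals owner Q hQ)]
    exact Finset.fold_max_sum_le_sum_fold_max _ _ _
  simp only [phi_eq, Finset.sum_sub_distrib, htotal]
  linarith

end LocalExperts

theorem local_experts_optimal_upper_bound_general {I B M : Type*} [DecidableEq I]
    [Fintype B] [DecidableEq B] [Fintype M] [DecidableEq M]
    (μ : I → ℝ) (vals : B → I → ℝ)
    (hμ : ∀ j, 0 ≤ μ j)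
    (Iset : M → Finset I)
    (owner : I → B) (howner : ∀ (i : B) (j : I), vals i j ≤ vals (owner j) j)
    (P : Finset (Finset I)) (hP : IsPartition P)
    (I0 : Finset I) (hI0 : I0 ∈ P)
    (assign : Finset I → M)
    (hassign : ∀ S ∈ P, S ≠ I0 → S ⊆ Iset (assign S)) :
    revenue μ vals P ≤
      partVal μ vals I0 +
      (∑ j ∈ Finset.univ.sup Iset, partVal μ vals {j}) +
      ∑ t : M, phi μ vals owner
        ((P.filter (fun S => S ≠ I0 ∧ assign S = t)).sup id) := by
  set E := P.erase I0
  have hEdisj : (E : Set (Finset I)).PairwiseDisjoint id :=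
    hP.pairwiseDisjoint.subset (Finset.coe_subset.mpr (Finset.erase_subset _ _))
  have hsplit : revenue μ vals P = partVal μ vals I0 + ∑ S ∈ E, partVal μ vals S :=
    (Finset.add_sum_erase _ _ hI0).symm
  have hparts : ∑ S ∈ E, partVal μ vals S ≤
      ∑ S ∈ E, ∑ j ∈ S, partVal μ vals {j} + ∑ S ∈ E, phi μ vals owner S := by
    rw [← Finset.sum_add_distrib]
    exact Finset.sum_le_sum fun S _ => partVal_le_sum_partVal_singleton_add_phi hμ howner S
  have hsingletons : ∑ S ∈ E, ∑ j ∈ S, partVal μ vals {j} ≤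
      ∑ j ∈ Finset.univ.sup Iset, partVal μ vals {j} :=
    Finset.sum_sum_le_sum_of_pairwiseDisjoint hEdisj
      (fun S hS => (hassign S (Finset.mem_of_mem_erase hS) (Finset.ne_of_mem_erase hS)).trans
        (Finset.le_sup (f := Iset) (Finset.mem_univ _)))
      fun j => partVal_nonneg μ vals {j}
  have hmediators : ∑ S ∈ E, phi μ vals owner S ≤ ∑ t : M, phi μ vals owner
      ((P.filter (fun S => S ≠ I0 ∧ assign S = t)).sup id) := by
    rw [← Finset.sum_fiberwise E assign]
    refine Finset.sum_le_sum fun t _ => ?_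
    have hfiber : E.filter (assign · = t) = P.filter (fun S => S ≠ I0 ∧ assign S = t) := by
      ext S
      simp only [E, Finset.mem_filter, Finset.mem_erase]
      tauto
    rw [hfiber]
    exact sum_phi_le_phi_sup _
      (hP.pairwiseDisjoint.subset (Finset.coe_subset.mpr (Finset.filter_subset _ _)))
  linarith

/-- Upper bound on the optimal revenue for local expert mediators: if `P` is a joint
partition with a (possibly empty) distinguished part `I0` and every other part is
contained in the expertise set of its assigned mediator, then
`R(P) ≤ μ(I0)·v(I0) + Σ_{j ∈ Î} s_j + Σ_t φ(A_t)`, where `Î = ⋃_t I_t`,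
`s_j = partVal {j}` and `A_t` is the union of the parts assigned to `t`. -/
theorem local_experts_optimal_upper_bound {I B M : Type*} [Fintype I] [DecidableEq I]
    [Fintype B] [DecidableEq B] [Fintype M] [DecidableEq M]
    (μ : I → ℝ) (vals : B → I → ℝ)
    (hμ : ∀ j, 0 ≤ μ j) (hv : ∀ i j, 0 ≤ vals i j)
    (Iset : M → Finset I)
    (owner : I → B) (howner : ∀ (i : B) (j : I), vals i j ≤ vals (owner j) j)
    (P : Finset (Finset I)) (hP : IsPartition P)
    (I0 : Finset I) (hI0 : I0 ∈ P)
    (assign : Finset I → M)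
    (hassign : ∀ S ∈ P, S ≠ I0 → S ⊆ Iset (assign S)) :
    revenue μ vals P ≤
      partVal μ vals I0 +
      (∑ j ∈ Finset.univ.sup Iset, partVal μ vals {j}) +
      ∑ t : M, phi μ vals owner
        ((P.filter (fun S => S ≠ I0 ∧ assign S = t)).sup id) :=
  local_experts_optimal_upper_bound_general μ vals hμ Iset owner howner P hP I0 hI0 assign hassign
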